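/- arXiv:1310.6212 — 9 statements merged into one kernel-verified Lean document; each statement's English description precedes it below -/
import Mathlib

section
/- Let m ≤ n and r be positive integers, and let S₁, …, Sₙ be pairwise distinct non-empty subsets of {1, …, r}. Consider the action of (ℤ/2)^r on the Milnor manifold H(m,n) in which g ∈ (ℤ/2)^r sends ([x₀:…:x_m], [y₀:…:y_n]) to ([σ(g)x], [τ(g)y]), where σ(g) multiplies the coordinate x_k (1 ≤ k ≤ m) by (−1)^{∑_{i∈S_k} g_i} and fixes x₀, and τ(g) multiplies y_k (1 ≤ k ≤ n) by (−1)^{∑_{i∈S_k} g_i} and fixes y₀. Then a point ([x],[y]) ∈ H(m,n) is fixed by every element g ∈ (ℤ/2)^r if and only if it equals P_{i,j} = ([e_i],[e_j]) for some 0 ≤ i ≤ m, 0 ≤ j ≤ n with i ≠ j. -/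
open scoped BigOperators
open scoped LinearAlgebra.Projectivization

noncomputable section

/-- The sign `(-1)^{∑_{i ∈ S} g i}` attached to a subset `S ⊆ {1,…,r}` and
an element `g ∈ (ℤ/2)^r`. -/
def milnorSign {r : ℕ} (S : Finset (Fin r)) (g : Fin r → ZMod 2) : ℝ :=
  (-1 : ℝ) ^ (∑ i ∈ S, g i).val

lemma milnorSign_ne_zero {r : ℕ} (S : Finset (Fin r)) (g : Fin r → ZMod 2) :
    milnorSign S g ≠ 0 :=
  pow_ne_zero _ (by norm_num)

/-- The coefficients of the sign-change map on `ℝ^{m+1}` determined by the subsets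
`S₁, …, Sₙ` (with `m ≤ n`): coordinate `0` is fixed, and coordinate `k` (for
`1 ≤ k ≤ m`) is multiplied by `(-1)^{∑_{i ∈ S_k} g_i}`. -/
def actCoef {n r : ℕ} (m : ℕ) (hmn : m ≤ n) (S : Fin n → Finset (Fin r))
    (g : Fin r → ZMod 2) : Fin (m + 1) → ℝ :=
  Fin.cases 1 fun k => milnorSign (S (Fin.castLE hmn k)) g

lemma actCoef_ne_zero {n r : ℕ} (m : ℕ) (hmn : m ≤ n) (S : Fin n → Finset (Fin r))
    (g : Fin r → ZMod 2) (k : Fin (m + 1)) : actCoef m hmn S g k ≠ 0 := by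
  induction k using Fin.cases with
  | zero => simp [actCoef]
  | succ k => simpa [actCoef] using milnorSign_ne_zero (S (Fin.castLE hmn k)) g

/-- The sign-change map on `ℝ^{m+1}` as a linear automorphism. -/
def actEquiv {n r : ℕ} (m : ℕ) (hmn : m ≤ n) (S : Fin n → Finset (Fin r))
    (g : Fin r → ZMod 2) : (Fin (m + 1) → ℝ) ≃ₗ[ℝ] (Fin (m + 1) → ℝ) :=
  LinearEquiv.piCongrRight fun k =>
    LinearEquiv.smulOfNeZero ℝ ℝ (actCoef m hmn S g k) (actCoef_ne_zero m hmn S g k)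

/-- The induced map on the projective space `ℙ(ℝ^{m+1})`. -/
def actMap {n r : ℕ} (m : ℕ) (hmn : m ≤ n) (S : Fin n → Finset (Fin r))
    (g : Fin r → ZMod 2) : ℙ ℝ (Fin (m + 1) → ℝ) → ℙ ℝ (Fin (m + 1) → ℝ) :=
  Projectivization.map (actEquiv m hmn S g).toLinearMap (actEquiv m hmn S g).injective

/-- The point `[e_i]` of projective space given by the `i`-th standard basis vector. -/
def stdPoint {N : ℕ} (i : Fin (N + 1)) : ℙ ℝ (Fin (N + 1) → ℝ) :=
  Projectivization.mk ℝ (Pi.single i 1) (by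
    intro h
    exact one_ne_zero (α := ℝ) (by simpa using congrFun h i))

/- ### Auxiliary lemmas -/

lemma milnorSign_single_mem {r : ℕ} (S : Finset (Fin r)) (i : Fin r) (hi : i ∈ S) :
    milnorSign S (Pi.single i 1) = -1 := by
  have h : (∑ j ∈ S, Pi.single i (1 : ZMod 2) j) = 1 := by
    rw [Finset.sum_eq_single i]
    · simp
    · intro b _ hb; exact Pi.single_eq_of_ne hb 1
    · intro h; exact absurd hi h
  simp [milnorSign, h, show (1 : ZMod 2).val = 1 from rfl]

lemma milnorSign_single_not_mem {r : ℕ} (S : Finset (Fin r)) (i : Fin r) (hi : i ∉ S) :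
    milnorSign S (Pi.single i 1) = 1 := by
  have h : (∑ j ∈ S, Pi.single i (1 : ZMod 2) j) = 0 := by
    apply Finset.sum_eq_zero
    intro b hb
    exact Pi.single_eq_of_ne (fun e => hi (by rw [← e]; exact hb)) 1
  simp [milnorSign, h]

lemma exists_g_ne {n r : ℕ} (m : ℕ) (hmn : m ≤ n) (S : Fin n → Finset (Fin r))
    (hSne : ∀ k, (S k).Nonempty) (hSdist : Function.Injective S)
    {k l : Fin (m + 1)} (hkl : k ≠ l) :
    ∃ g : Fin r → ZMod 2, actCoef m hmn S g k ≠ actCoef m hmn S g l := by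
  induction k using Fin.cases with
  | zero =>
    induction l using Fin.cases with
    | zero => exact absurd rfl hkl
    | succ l =>
      obtain ⟨i, hi⟩ := hSne (Fin.castLE hmn l)
      refine ⟨Pi.single i 1, ?_⟩
      simp [actCoef, milnorSign_single_mem _ _ hi]
      norm_num
  | succ k =>
    induction l using Fin.cases with
    | zero =>
      obtain ⟨i, hi⟩ := hSne (Fin.castLE hmn k)
      refine ⟨Pi.single i 1, ?_⟩
      simp [actCoef, milnorSign_single_mem _ _ hi]
      norm_num
    | succ l =>
      have hkl' : Fin.castLE hmn k ≠ Fin.castLE hmn l := by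
        intro h
        apply hkl
        exact congrArg Fin.succ (Fin.castLE_injective hmn h)
      have hS : S (Fin.castLE hmn k) ≠ S (Fin.castLE hmn l) := fun h => hkl' (hSdist h)
      have : ∃ i, ¬ (i ∈ S (Fin.castLE hmn k) ↔ i ∈ S (Fin.castLE hmn l)) := by
        by_contra h
        push_neg at h
        exact hS (Finset.ext h)
      obtain ⟨i, hi⟩ := this
      refine ⟨Pi.single i 1, ?_⟩
      simp only [actCoef, Fin.cases_succ]
      rcases Classical.em (i ∈ S (Fin.castLE hmn k)) with h1 | h1 <;>
        rcases Classical.em (i ∈ S (Fin.castLE hmn l)) with h2 | h2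
      · exact absurd (iff_of_true h1 h2) hi
      · rw [milnorSign_single_mem _ _ h1, milnorSign_single_not_mem _ _ h2]; norm_num
      · rw [milnorSign_single_not_mem _ _ h1, milnorSign_single_mem _ _ h2]; norm_num
      · exact absurd (iff_of_false h1 h2) hi

lemma actEquiv_apply {n r : ℕ} (m : ℕ) (hmn : m ≤ n) (S : Fin n → Finset (Fin r))
    (g : Fin r → ZMod 2) (x : Fin (m + 1) → ℝ) (k : Fin (m + 1)) :
    actEquiv m hmn S g x k = actCoef m hmn S g k * x k := rfl

lemma actMap_mk {n r : ℕ} (m : ℕ) (hmn : m ≤ n) (S : Fin n → Finset (Fin r))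
    (g : Fin r → ZMod 2) (x : Fin (m + 1) → ℝ) (hx : x ≠ 0) :
    actMap m hmn S g (Projectivization.mk ℝ x hx) =
      Projectivization.mk ℝ (actEquiv m hmn S g x)
        (fun h => hx (by simpa using congrArg (actEquiv m hmn S g).symm h)) := by
  apply Projectivization.map_mk

lemma actMap_stdPoint {n r : ℕ} (m : ℕ) (hmn : m ≤ n) (S : Fin n → Finset (Fin r))
    (g : Fin r → ZMod 2) (i : Fin (m + 1)) :
    actMap m hmn S g (stdPoint i) = stdPoint i := by
  rw [stdPoint, actMap_mk, Projectivization.mk_eq_mk_iff']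
  refine ⟨actCoef m hmn S g i, funext fun k => ?_⟩
  rw [actEquiv_apply]
  by_cases hk : k = i
  · subst hk; simp
  · simp [Pi.single_eq_of_ne hk]

lemma mk_eq_stdPoint {N : ℕ} (x : Fin (N + 1) → ℝ) (hx : x ≠ 0) (i : Fin (N + 1))
    (h0 : ∀ l, l ≠ i → x l = 0) :
    Projectivization.mk ℝ x hx = stdPoint i := by
  rw [stdPoint, Projectivization.mk_eq_mk_iff']
  refine ⟨x i, funext fun k => ?_⟩
  by_cases hk : k = i
  · subst hk; simp
  · simp [Pi.single_eq_of_ne hk, h0 k hk]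

lemma fixed_support_unique {n r : ℕ} (m : ℕ) (hmn : m ≤ n) (S : Fin n → Finset (Fin r))
    (hSne : ∀ k, (S k).Nonempty) (hSdist : Function.Injective S)
    (x : Fin (m + 1) → ℝ) (hx : x ≠ 0)
    (h : ∀ g : Fin r → ZMod 2,
      actMap m hmn S g (Projectivization.mk ℝ x hx) = Projectivization.mk ℝ x hx) :
    ∃ i, x i ≠ 0 ∧ ∀ l, l ≠ i → x l = 0 := by
  obtain ⟨i, hi⟩ : ∃ i, x i ≠ 0 := by
    by_contra hc
    push_neg at hc
    exact hx (funext fun k => hc k)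
  refine ⟨i, hi, fun l hl => ?_⟩
  by_contra hxl
  obtain ⟨g, hg⟩ := exists_g_ne m hmn S hSne hSdist hl
  have := h g
  rw [actMap_mk, Projectivization.mk_eq_mk_iff'] at this
  obtain ⟨a, ha⟩ := this
  have hal : a * x l = actCoef m hmn S g l * x l := by
    have := congrFun ha l
    rw [actEquiv_apply] at this
    exact this
  have hai : a * x i = actCoef m hmn S g i * x i := by
    have := congrFun ha i
    rw [actEquiv_apply] at this
    exact this
  exact hg ((mul_right_cancel₀ hxl hal.symm).trans (mul_right_cancel₀ hi hai))

/-- For `m ≤ n` and `r` positive, and pairwise distinct non-empty subsets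
`S₁, …, Sₙ ⊆ {1,…,r}`, a point `([x],[y])` of the Milnor manifold `H(m,n)`
(i.e. `x ≠ 0`, `y ≠ 0`, `∑_{j=0}^m x_j y_j = 0`) is fixed by every `g ∈ (ℤ/2)^r`
(acting via the sign changes `σ(g)`, `τ(g)`) if and only if it equals
`P_{i,j} = ([e_i],[e_j])` for some `0 ≤ i ≤ m`, `0 ≤ j ≤ n` with `i ≠ j`. -/
theorem milnor_fixed_points_iff
    (m n r : ℕ) (hm : 0 < m) (hn : 0 < n) (hr : 0 < r) (hmn : m ≤ n)
    (S : Fin n → Finset (Fin r)) (hSne : ∀ k, (S k).Nonempty)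
    (hSdist : Function.Injective S)
    (x : Fin (m + 1) → ℝ) (hx : x ≠ 0) (y : Fin (n + 1) → ℝ) (hy : y ≠ 0)
    (hxy : ∑ j : Fin (m + 1), x j * y (Fin.castLE (by omega) j) = 0) :
    (∀ g : Fin r → ZMod 2,
        actMap m hmn S g (Projectivization.mk ℝ x hx) = Projectivization.mk ℝ x hx ∧
        actMap n le_rfl S g (Projectivization.mk ℝ y hy) = Projectivization.mk ℝ y hy) ↔
      ∃ (i : Fin (m + 1)) (j : Fin (n + 1)), (i : ℕ) ≠ (j : ℕ) ∧
        Projectivization.mk ℝ x hx = stdPoint i ∧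
        Projectivization.mk ℝ y hy = stdPoint j := by
  constructor
  · intro h
    obtain ⟨i, hxi, hx0⟩ :=
      fixed_support_unique m hmn S hSne hSdist x hx (fun g => (h g).1)
    obtain ⟨j, hyj, hy0⟩ :=
      fixed_support_unique n le_rfl S hSne hSdist y hy (fun g => (h g).2)
    refine ⟨i, j, ?_, mk_eq_stdPoint x hx i hx0, mk_eq_stdPoint y hy j hy0⟩
    intro hij
    have hsum : ∑ k : Fin (m + 1), x k * y (Fin.castLE (by omega) k) =
        x i * y (Fin.castLE (by omega) i) :=
      Fintype.sum_eq_single i (fun k hk => by rw [hx0 k hk, zero_mul])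
    have hcj : (Fin.castLE (by omega : m + 1 ≤ n + 1) i) = j := Fin.ext (by simpa using hij)
    rw [hsum, hcj] at hxy
    exact mul_ne_zero hxi hyj hxy
  · rintro ⟨i, j, hij, hxi, hyj⟩ g
    rw [hxi, hyj]
    exact ⟨actMap_stdPoint m hmn S g i, actMap_stdPoint n le_rfl S g j⟩
end
end

section
/- Let m ≤ n and r be positive integers, and let S₁, …, Sₙ be pairwise distinct non-empty subsets of {1, …, r}. For the action of (ℤ/2)^r on the Milnor manifold H(m,n) in which g sends ([x],[y]) to ([σ(g)x],[τ(g)y]) (σ(g) multiplying x_k by (−1)^{∑_{i∈S_k} g_i} for 1 ≤ k ≤ m and fixing x₀, τ(g) multiplying y_k by (−1)^{∑_{i∈S_k} g_i} for 1 ≤ k ≤ n and fixing y₀), the set of points of H(m,n) fixed by every g ∈ (ℤ/2)^r is finite of cardinality (m+1)·n. -/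
open scoped BigOperators
open scoped LinearAlgebra.Projectivization

noncomputable section

/-- The Milnor manifold `H(m,n) ⊆ ℙ(ℝ^{m+1}) × ℙ(ℝ^{n+1})`, consisting of pairs
`([x],[y])` with `∑_{j=0}^{m} x_j y_j = 0` (a condition independent of the choice of
representatives, here expressed using the canonical representatives). -/
def milnorSet (m n : ℕ) (hmn : m ≤ n) :
    Set (ℙ ℝ (Fin (m + 1) → ℝ) × ℙ ℝ (Fin (n + 1) → ℝ)) :=
  {p | ∑ j : Fin (m + 1), p.1.rep j * p.2.rep (Fin.castLE (by omega) j) = 0}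

/-! Every `σ(g)` and `τ(g)` is diagonal, so a point `[x]` fixed by all of them spans a common
eigenline. Reading coordinate `0` as carrying `S₀ = ∅`, the coefficient of coordinate `k` is the
character `g ↦ (-1)^{∑_{i ∈ S_k} g_i}`, and distinct sets give distinct characters (test on `g = eᵢ`
for `i` in their symmetric difference). Hence `x` has a single nonzero coordinate, the fixed points
are the pairs `([eᵢ], [eⱼ])`, and the Milnor equation `∑ xⱼ yⱼ = 0` keeps exactly those with
`i ≠ j`. -/

section CoordinatePoints

open Projectivization

variable {K : Type*} {ι : Type*} [Field K]

theorem eq_of_map_mk_eq_self_of_diagonal {f : (ι → K) →ₗ[K] (ι → K)}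
    (hf : Function.Injective f) {c : ι → K} (hdiag : ∀ v k, f v k = c k * v k) {v : ι → K}
    (hv : v ≠ 0) (hfix : map f hf (mk K v hv) = mk K v hv) {k k' : ι}
    (hk : v k ≠ 0) (hk' : v k' ≠ 0) : c k = c k' := by
  rw [map_mk, mk_eq_mk_iff'] at hfix
  obtain ⟨a, ha⟩ := hfix
  have hcoef : ∀ j, v j ≠ 0 → c j = a := fun j hj =>
    mul_right_cancel₀ hj <| by simpa [hdiag] using (congrFun ha j).symm
  rw [hcoef k hk, hcoef k' hk']

variable (K) [DecidableEq ι]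

def coordPoint (i : ι) : ℙ K (ι → K) :=
  mk K (Pi.single i 1) (by simp)

variable {K}

theorem coordPoint_injective : Function.Injective (coordPoint K (ι := ι)) := by
  intro i i' h
  obtain ⟨a, ha⟩ := (mk_eq_mk_iff' K _ _ _ _).1 h
  by_contra hne
  simpa [Pi.single_apply, hne] using congrFun ha i

theorem mk_eq_coordPoint {v : ι → K} (hv : v ≠ 0) {i : ι} (hsupp : ∀ k, k ≠ i → v k = 0) :
    mk K v hv = coordPoint K i := by
  refine (mk_eq_mk_iff' K _ _ _ _).2 ⟨v i, funext fun k => ?_⟩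
  by_cases hk : k = i
  · simp [hk]
  · simp [hk, hsupp k hk]

theorem map_coordPoint_of_diagonal {f : (ι → K) →ₗ[K] (ι → K)} (hf : Function.Injective f)
    {c : ι → K} (hdiag : ∀ v k, f v k = c k * v k) (i : ι) :
    map f hf (coordPoint K i) = coordPoint K i := by
  refine (mk_eq_mk_iff' K _ _ _ _).2 ⟨c i, funext fun k => ?_⟩
  by_cases hk : k = i
  · simp [hk, hdiag]
  · simp [hk, hdiag]

theorem forall_map_eq_self_iff_of_diagonal {G : Type*} {f : G → (ι → K) →ₗ[K] (ι → K)}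
    (hf : ∀ g, Function.Injective (f g)) {c : G → ι → K}
    (hdiag : ∀ g v k, f g v k = c g k * v k) (hsep : ∀ k k', k ≠ k' → ∃ g, c g k ≠ c g k')
    (x : ℙ K (ι → K)) :
    (∀ g, map (f g) (hf g) x = x) ↔ ∃ i, coordPoint K i = x := by
  constructor
  · induction x using Projectivization.ind with | h v hv => ?_
    intro hfix
    obtain ⟨i, hi⟩ := Function.ne_iff.1 hv
    refine ⟨i, (mk_eq_coordPoint hv fun k hk => ?_).symm⟩
    by_contra hvk
    obtain ⟨g, hg⟩ := hsep k i hk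
    exact hg (eq_of_map_mk_eq_self_of_diagonal (hf g) (hdiag g) hv (hfix g) hvk hi)
  · rintro ⟨i, rfl⟩ g
    exact map_coordPoint_of_diagonal (hf g) (hdiag g) i

end CoordinatePoints

theorem milnorSign_single {r : ℕ} (S : Finset (Fin r)) (i : Fin r) :
    milnorSign S (Pi.single i 1) = if i ∈ S then -1 else 1 := by
  rw [milnorSign, Finset.sum_pi_single']
  split_ifs <;> simp [ZMod.val_one]

theorem exists_milnorSign_ne {r : ℕ} {S T : Finset (Fin r)} (h : S ≠ T) :
    ∃ g, milnorSign S g ≠ milnorSign T g := by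
  obtain ⟨i, hi⟩ : ∃ i, ¬(i ∈ S ↔ i ∈ T) := by simpa [Finset.ext_iff] using h
  refine ⟨Pi.single i 1, ?_⟩
  rw [milnorSign_single, milnorSign_single]
  split_ifs <;> norm_num <;> tauto

theorem actCoef_eq_milnorSign {n r : ℕ} (m : ℕ) (hmn : m ≤ n) (S : Fin n → Finset (Fin r))
    (g : Fin r → ZMod 2) (k : Fin (m + 1)) :
    actCoef m hmn S g k =
      milnorSign ((Fin.cons ∅ (S ∘ Fin.castLE hmn) : Fin (m + 1) → Finset (Fin r)) k) g := by
  induction k using Fin.cases <;> simp [actCoef, milnorSign]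

theorem exists_actCoef_ne {n r : ℕ} (m : ℕ) (hmn : m ≤ n) {S : Fin n → Finset (Fin r)}
    (hSne : ∀ k, (S k).Nonempty) (hSdist : Function.Injective S) {k k' : Fin (m + 1)}
    (hkk' : k ≠ k') : ∃ g, actCoef m hmn S g k ≠ actCoef m hmn S g k' := by
  have hinj : Function.Injective (Fin.cons ∅ (S ∘ Fin.castLE hmn) : Fin (m + 1) → _) :=
    Fin.cons_injective_iff.2 ⟨fun ⟨j, hj⟩ => (hSne _).ne_empty hj,
      hSdist.comp (Fin.castLE_injective hmn)⟩
  simpa only [actCoef_eq_milnorSign] using exists_milnorSign_ne (hinj.ne hkk')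

theorem forall_actMap_eq_self_iff {n r : ℕ} (m : ℕ) (hmn : m ≤ n) {S : Fin n → Finset (Fin r)}
    (hSne : ∀ k, (S k).Nonempty) (hSdist : Function.Injective S) (x : ℙ ℝ (Fin (m + 1) → ℝ)) :
    (∀ g, actMap m hmn S g x = x) ↔ ∃ i, coordPoint ℝ i = x :=
  forall_map_eq_self_iff_of_diagonal (fun g => (actEquiv m hmn S g).injective)
    (fun _ _ _ => rfl) (fun _ _ => exists_actCoef_ne m hmn hSne hSdist) x

theorem mk_mem_milnorSet_iff {m n : ℕ} (hmn : m ≤ n) {v : Fin (m + 1) → ℝ}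
    {w : Fin (n + 1) → ℝ} (hv : v ≠ 0) (hw : w ≠ 0) :
    (Projectivization.mk ℝ v hv, Projectivization.mk ℝ w hw) ∈ milnorSet m n hmn ↔
      ∑ j, v j * w (Fin.castLE (by omega) j) = 0 := by
  obtain ⟨a, ha⟩ := Projectivization.exists_smul_eq_mk_rep ℝ v hv
  obtain ⟨b, hb⟩ := Projectivization.exists_smul_eq_mk_rep ℝ w hw
  have hscale : ∑ j, (a • v) j * (b • w) (Fin.castLE (by omega) j) =
      (a * b : ℝ) * ∑ j, v j * w (Fin.castLE (by omega) j) := by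
    simp only [Finset.mul_sum, Units.smul_def, Pi.smul_apply, smul_eq_mul]
    exact Finset.sum_congr rfl fun _ _ => by ring
  simp only [milnorSet, Set.mem_ofPred_eq, ← ha, ← hb, hscale, mul_eq_zero, Units.ne_zero,
    false_or]

theorem coordPoint_mem_milnorSet_iff {m n : ℕ} (hmn : m ≤ n) (i : Fin (m + 1)) (j : Fin (n + 1)) :
    (coordPoint ℝ i, coordPoint ℝ j) ∈ milnorSet m n hmn ↔ Fin.castLE (by omega) i ≠ j := by
  rw [coordPoint, coordPoint, mk_mem_milnorSet_iff, Finset.sum_eq_single i]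
  · simp [Pi.single_apply]
  · intro k _ hk
    simp [hk]
  · simp

theorem ncard_setOf_apply_ne {α β : Type*} [Fintype α] [Fintype β] (f : α → β) :
    {p : α × β | f p.1 ≠ p.2}.ncard = Fintype.card α * (Fintype.card β - 1) := by
  classical
  rw [Set.ncard_eq_toFinset_card', Set.toFinset_ofPred, Finset.card_filter, Fintype.sum_prod_type]
  have hfiber : ∀ a, ∑ b, (if f a ≠ b then 1 else 0) = Fintype.card β - 1 := fun a => by
    rw [← Finset.card_filter, Finset.filter_ne, Finset.card_erase_of_mem (Finset.mem_univ _),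
      Finset.card_univ]
  simp only [hfiber, Finset.sum_const, Finset.card_univ, smul_eq_mul]

theorem milnor_fixed_points_card_general
    (m n r : ℕ) (hmn : m ≤ n)
    (S : Fin n → Finset (Fin r)) (hSne : ∀ k, (S k).Nonempty)
    (hSdist : Function.Injective S) :
    ({p ∈ milnorSet m n hmn | ∀ g : Fin r → ZMod 2,
        actMap m hmn S g p.1 = p.1 ∧ actMap n le_rfl S g p.2 = p.2}).Finite ∧
    Set.ncard {p ∈ milnorSet m n hmn | ∀ g : Fin r → ZMod 2,
        actMap m hmn S g p.1 = p.1 ∧ actMap n le_rfl S g p.2 = p.2} = (m + 1) * n := by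
  have hfixed : {p ∈ milnorSet m n hmn | ∀ g : Fin r → ZMod 2,
        actMap m hmn S g p.1 = p.1 ∧ actMap n le_rfl S g p.2 = p.2} =
      Prod.map (coordPoint ℝ) (coordPoint ℝ) ''
        {ij : Fin (m + 1) × Fin (n + 1) | Fin.castLE (by omega) ij.1 ≠ ij.2} := by
    ext ⟨x, y⟩
    simp only [Set.mem_ofPred_eq, forall_and, forall_actMap_eq_self_iff m hmn hSne hSdist,
      forall_actMap_eq_self_iff n le_rfl hSne hSdist, Set.mem_image, Prod.exists, Prod.map,
      Prod.mk.injEq]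
    constructor
    · rintro ⟨hmem, ⟨i, rfl⟩, ⟨j, rfl⟩⟩
      exact ⟨i, j, (coordPoint_mem_milnorSet_iff hmn i j).1 hmem, rfl, rfl⟩
    · rintro ⟨i, j, hij, rfl, rfl⟩
      exact ⟨(coordPoint_mem_milnorSet_iff hmn i j).2 hij, ⟨i, rfl⟩, ⟨j, rfl⟩⟩
  rw [hfixed]
  refine ⟨(Set.toFinite _).image _, ?_⟩
  rw [Set.ncard_image_of_injective _ (coordPoint_injective.prodMap coordPoint_injective),
    ncard_setOf_apply_ne]
  simp

/-- For `m ≤ n` and `r` positive and pairwise distinct non-empty subsets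
`S₁, …, Sₙ ⊆ {1,…,r}`, the set of points of the Milnor manifold `H(m,n)` fixed by every
`g ∈ (ℤ/2)^r` (acting via the sign changes `σ(g)`, `τ(g)`) is finite of cardinality
`(m+1)·n`. -/
theorem milnor_fixed_points_card
    (m n r : ℕ) (hm : 0 < m) (hn : 0 < n) (hr : 0 < r) (hmn : m ≤ n)
    (S : Fin n → Finset (Fin r)) (hSne : ∀ k, (S k).Nonempty)
    (hSdist : Function.Injective S) :
    ({p ∈ milnorSet m n hmn | ∀ g : Fin r → ZMod 2,
        actMap m hmn S g p.1 = p.1 ∧ actMap n le_rfl S g p.2 = p.2}).Finite ∧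
    Set.ncard {p ∈ milnorSet m n hmn | ∀ g : Fin r → ZMod 2,
        actMap m hmn S g p.1 = p.1 ∧ actMap n le_rfl S g p.2 = p.2} = (m + 1) * n :=
  milnor_fixed_points_card_general m n r hmn S hSne hSdist
end
end

section
/- Let r, n ∈ ℕ and let S₀, S₁, …, Sₙ be pairwise distinct subsets of {1,…,r}. For g ∈ (ℤ/2)^r let ρ(g) be the linear automorphism of ℝ^{n+1} given by (ρ(g)x)_k = (−1)^{∑_{i∈S_k} g_i} x_k for 0 ≤ k ≤ n. Then for a nonzero vector x ∈ ℝ^{n+1}, the line spanned by x is fixed by ρ(g) for every g ∈ (ℤ/2)^r (i.e., for every g there is a scalar c with ρ(g)x = c·x) if and only if exactly one coordinate of x is nonzero. -/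
open scoped BigOperators

/-- Let `S₀, S₁, …, Sₙ` be pairwise distinct subsets of `{1,…,r}`, and
for `g ∈ (ℤ/2)^r` let `ρ(g)` be the linear automorphism of `ℝ^{n+1}` given by
`(ρ(g)x)_k = (-1)^{∑_{i ∈ S_k} g_i} · x_k`. Then for a nonzero `x ∈ ℝ^{n+1}`, the line
spanned by `x` is fixed by every `ρ(g)` (i.e. for every `g` there is a scalar `c` with
`ρ(g)x = c • x`) if and only if exactly one coordinate of `x` is nonzero. -/
theorem line_fixed_iff_single_coordinate
    (r n : ℕ) (S : Fin (n + 1) → Finset (Fin r)) (hSdist : Function.Injective S)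
    (x : Fin (n + 1) → ℝ) (hx : x ≠ 0) :
    (∀ g : Fin r → ZMod 2, ∃ c : ℝ,
        (fun k => (-1 : ℝ) ^ (∑ i ∈ S k, g i).val * x k) = c • x) ↔
      ∃! k, x k ≠ 0 := by
  constructor
  · intro h
    obtain ⟨k₀, hk₀⟩ := Function.ne_iff.mp hx
    refine ⟨k₀, hk₀, fun k' hk' => ?_⟩
    by_contra hne
    have hS : S k' ≠ S k₀ := fun e => hne (hSdist e)
    obtain ⟨i, hi⟩ : ∃ i, ¬ (i ∈ S k' ↔ i ∈ S k₀) := by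
      by_contra hall
      push_neg at hall
      exact hS (Finset.ext fun i => hall i)
    set g : Fin r → ZMod 2 := fun j => if j = i then 1 else 0 with hg
    obtain ⟨c, hc⟩ := h g
    have hsum : ∀ k, (∑ j ∈ S k, g j) = if i ∈ S k then 1 else 0 := by
      intro k
      simp [hg, Finset.sum_ite_eq' (S k) i (fun _ => (1 : ZMod 2))]
    have hck : ∀ k, x k ≠ 0 → c = (-1 : ℝ) ^ (∑ j ∈ S k, g j).val := by
      intro k hk
      have h1 := congrFun hc k
      simp only [Pi.smul_apply, smul_eq_mul] at h1
      exact (mul_right_cancel₀ hk h1).symm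
    have h1 := hck k' hk'
    have h2 := hck k₀ hk₀
    rw [hsum] at h1 h2
    by_cases hmem : i ∈ S k'
    · have hmem₀ : i ∉ S k₀ := fun hm => hi ⟨fun _ => hm, fun _ => hmem⟩
      rw [if_pos hmem] at h1
      rw [if_neg hmem₀] at h2
      rw [h1] at h2
      norm_num [ZMod.val_one, ZMod.val_zero] at h2
    · have hmem₀ : i ∈ S k₀ := by
        by_contra hm
        exact hi ⟨fun hh => absurd hh hmem, fun hh => absurd hh hm⟩
      rw [if_neg hmem] at h1
      rw [if_pos hmem₀] at h2
      rw [h1] at h2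
      norm_num [ZMod.val_one, ZMod.val_zero] at h2
  · rintro ⟨k₀, hk₀, huniq⟩ g
    refine ⟨(-1 : ℝ) ^ (∑ i ∈ S k₀, g i).val, funext fun k => ?_⟩
    by_cases hk : k = k₀
    · subst hk; simp
    · have hxk : x k = 0 := by
        by_contra hxk
        exact hk (huniq k hxk)
      simp [hxk]
end

section
/- Let n ≥ 3 and 1 ≤ m < n. In the polynomial ring ℤ/2[X_S], with one variable X_S for each non-empty subset S of {1,…,n}, the element E(m,n) := (∏_{i=1}^{m} X_{{i}})·(∑_{j=1}^{n} ∏_{k=1, k≠j}^{n} X_{{k,j}}) + ∑_{i=1}^{m} X_{{i}}·(∏_{k=1, k≠i}^{m} X_{{k,i}})·( ∏_{l=1, l≠i}^{n} X_{{l}} + ∑_{j=1, j≠i}^{n} X_{{j}}·∏_{l=1, l≠i, l≠j}^{n} X_{{l,j}} ) is nonzero. -/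
open scoped BigOperators
open MvPolynomial

/-- For `n ≥ 3` and `1 ≤ m < n`, in the polynomial ring
`ℤ/2[X_S]` with one variable `X_S` for each (non-empty) subset `S ⊆ {1,…,n}`, the element
`E(m,n) = (∏_{i=1}^m X_{{i}})·(∑_{j=1}^n ∏_{k≠j} X_{{k,j}})
  + ∑_{i=1}^m X_{{i}}·(∏_{k=1,k≠i}^m X_{{k,i}})·(∏_{l≠i} X_{{l}} + ∑_{j≠i} X_{{j}}·∏_{l≠i,j} X_{{l,j}})`
is nonzero.  (This is the total tangential representation
`η_*[(ℤ/2)^n, H(m,n), φ]`.) -/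
theorem eta_milnor_ne_zero (m n : ℕ) (hn : 3 ≤ n) (hm : 1 ≤ m) (hmn : m < n) :
    ((∏ i : Fin m, (X ({Fin.castLE hmn.le i} : Finset (Fin n)) :
          MvPolynomial (Finset (Fin n)) (ZMod 2))) *
        (∑ j : Fin n, ∏ k ∈ Finset.univ.erase j, X ({k, j} : Finset (Fin n))) +
      ∑ i : Fin m,
        X ({Fin.castLE hmn.le i} : Finset (Fin n)) *
          (∏ k ∈ Finset.univ.erase i,
            X ({Fin.castLE hmn.le k, Fin.castLE hmn.le i} : Finset (Fin n))) *
          ((∏ l ∈ Finset.univ.erase (Fin.castLE hmn.le i), X ({l} : Finset (Fin n))) +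
            ∑ j ∈ Finset.univ.erase (Fin.castLE hmn.le i),
              X ({j} : Finset (Fin n)) *
                ∏ l ∈ (Finset.univ.erase (Fin.castLE hmn.le i)).erase j,
                  X ({l, j} : Finset (Fin n)))) ≠ 0 := by
  intro h
  have hn1 : n - 1 < n := by omega
  set j0 : Fin n := ⟨n - 1, hn1⟩ with hj0
  set f : Finset (Fin n) → ZMod 2 :=
    fun S => if (S.card = 1 ∧ ∀ v ∈ S, (v : ℕ) < m) ∨ (S.card = 2 ∧ j0 ∈ S) then 1 else 0
    with hf
  have fsing : ∀ v : Fin n, f {v} = if (v : ℕ) < m then 1 else 0 := by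
    intro v
    simp [hf]
  have fpair : ∀ k j : Fin n, k ≠ j → f {k, j} = if j0 = k ∨ j0 = j then 1 else 0 := by
    intro k j hkj
    simp [hf, Finset.card_pair hkj]
  have hval := congrArg (MvPolynomial.eval f) h
  simp only [map_add, map_mul, map_sum, map_prod, eval_X, map_zero] at hval
  have h1 : (∏ i : Fin m, f {Fin.castLE hmn.le i}) = 1 := by
    apply Finset.prod_eq_one
    intro i _
    rw [fsing]
    simp [Fin.coe_castLE, i.isLt]
  have h2 : (∑ j : Fin n, ∏ k ∈ Finset.univ.erase j, f {k, j}) = 1 := by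
    rw [Finset.sum_eq_single j0]
    · apply Finset.prod_eq_one
      intro k hk
      rw [fpair k j0 (Finset.ne_of_mem_erase hk)]
      simp
    · intro j _ hj
      obtain ⟨k, hkj, hkj0⟩ : ∃ k : Fin n, k ≠ j ∧ k ≠ j0 := by
        by_contra hc
        push_neg at hc
        have hsub : (Finset.univ : Finset (Fin n)) ⊆ {j, j0} := by
          intro x _
          rcases eq_or_ne x j with hx | hx
          · simp [hx]
          · simp [hc x hx]
        have hcard := Finset.card_le_card hsub
        have : ({j, j0} : Finset (Fin n)).card ≤ 2 := by
          refine (Finset.card_insert_le _ _).trans ?_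
          simp
        simp [Finset.card_univ] at hcard
        omega
      apply Finset.prod_eq_zero (Finset.mem_erase.2 ⟨hkj, Finset.mem_univ k⟩)
      rw [fpair k j hkj, if_neg]
      rintro (rfl | rfl)
      · exact hkj0 rfl
      · exact hj rfl
    · intro hj0mem
      exact absurd (Finset.mem_univ j0) hj0mem
  have h3 : (∑ i : Fin m,
      f {Fin.castLE hmn.le i} *
        (∏ k ∈ Finset.univ.erase i, f {Fin.castLE hmn.le k, Fin.castLE hmn.le i}) *
        ((∏ l ∈ Finset.univ.erase (Fin.castLE hmn.le i), f {l}) +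
          ∑ j ∈ Finset.univ.erase (Fin.castLE hmn.le i),
            f {j} * ∏ l ∈ (Finset.univ.erase (Fin.castLE hmn.le i)).erase j, f {l, j})) = 0 := by
    apply Finset.sum_eq_zero
    intro i _
    by_cases h1m : m = 1
    · have hB : (∏ l ∈ Finset.univ.erase (Fin.castLE hmn.le i), f {l}) = 0 := by
        apply Finset.prod_eq_zero (i := j0)
        · refine Finset.mem_erase.2 ⟨?_, Finset.mem_univ _⟩
          intro hcontra
          have := congrArg Fin.val hcontra
          simp [hj0, Fin.coe_castLE] at this
          have hi := i.isLt
          omega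
        · rw [fsing, if_neg]
          simp only [hj0]
          omega
      have hC : (∑ j ∈ Finset.univ.erase (Fin.castLE hmn.le i),
          f {j} * ∏ l ∈ (Finset.univ.erase (Fin.castLE hmn.le i)).erase j, f {l, j}) = 0 := by
        apply Finset.sum_eq_zero
        intro j hj
        have hfj : f {j} = 0 := by
          rw [fsing, if_neg]
          intro hjm
          have hji : j = Fin.castLE hmn.le i := by
            apply Fin.ext
            have hi := i.isLt
            simp [Fin.coe_castLE]
            omega
          exact (Finset.mem_erase.1 hj).1 hji
        rw [hfj, zero_mul]
      rw [hB, hC, add_zero, mul_zero]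
    · have hm2 : 2 ≤ m := by omega
      obtain ⟨k, hk⟩ := Fintype.exists_ne_of_one_lt_card (by simp; omega) i
      have hA : (∏ k ∈ Finset.univ.erase i,
          f {Fin.castLE hmn.le k, Fin.castLE hmn.le i}) = 0 := by
        apply Finset.prod_eq_zero (Finset.mem_erase.2 ⟨hk, Finset.mem_univ _⟩)
        have hne : Fin.castLE hmn.le k ≠ Fin.castLE hmn.le i := by
          intro hc
          exact hk (Fin.castLE_injective _ hc)
        rw [fpair _ _ hne, if_neg]
        rintro (hc | hc) <;>
        · have := congrArg Fin.val hc
          simp [hj0, Fin.coe_castLE] at this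
          have := k.isLt
          have := i.isLt
          omega
      rw [hA, mul_zero, zero_mul]
  rw [h1, h2, h3, one_mul, add_zero] at hval
  exact one_ne_zero hval
end

section
/- Let n ≥ 3, 1 ≤ m < n, r ≥ 1, and let S₁,…,Sₙ be non-empty subsets of {1,…,r} such that the n + n(n−1)/2 subsets S₁,…,Sₙ and S_k Δ S_l (for all k ≠ l, where Δ is symmetric difference) are pairwise distinct (in particular each S_k Δ S_l is non-empty). Then in the polynomial ring ℤ/2[X_S], with one variable X_S for each non-empty subset S of {1,…,r}, the element (∏_{i=1}^{m} X_{S_i})·(∑_{j=1}^{n} ∏_{k=1, k≠j}^{n} X_{S_k Δ S_j}) + ∑_{i=1}^{m} X_{S_i}·(∏_{k=1, k≠i}^{m} X_{S_k Δ S_i})·( ∏_{l=1, l≠i}^{n} X_{S_l} + ∑_{j=1, j≠i}^{n} X_{S_j}·∏_{l=1, l≠i, l≠j}^{n} X_{S_l Δ S_j} ) is nonzero. -/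
open scoped BigOperators symmDiff
open MvPolynomial Finset

lemma prod_X_eq_monomial {ι σ R : Type*} [CommSemiring R]
    (s : Finset ι) (f : ι → σ) :
    ∏ k ∈ s, (X (f k) : MvPolynomial σ R)
      = monomial (∑ k ∈ s, Finsupp.single (f k) 1) 1 := by
  induction s using Finset.cons_induction with
  | empty => simp
  | cons a s ha ih =>
      rw [Finset.prod_cons, Finset.sum_cons, ih, monomial_single_add, pow_one]

lemma sum_single_apply {ι α : Type*} [DecidableEq α] (s : Finset ι) (f : ι → α) (x : α) :
    (∑ k ∈ s, Finsupp.single (f k) (1:ℕ)) x = ∑ k ∈ s, if f k = x then 1 else 0 := by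
  rw [Finsupp.finset_sum_apply]
  simp [Finsupp.single_apply]

lemma one_le_sum_ite {ι α : Type*} [DecidableEq α] (s : Finset ι) (f : ι → α) (x : α)
    (k : ι) (hk : k ∈ s) (hfk : f k = x) :
    1 ≤ ∑ j ∈ s, if f j = x then 1 else 0 := by
  have := Finset.single_le_sum (f := fun j => if f j = x then (1:ℕ) else 0)
    (fun _ _ => Nat.zero_le _) hk
  simpa [hfk] using this

lemma sum_ite_eq_zero' {ι α : Type*} [DecidableEq α] (s : Finset ι) (f : ι → α) (x : α)
    (h : ∀ k ∈ s, f k ≠ x) :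
    (∑ j ∈ s, if f j = x then 1 else 0) = 0 :=
  Finset.sum_eq_zero fun k hk => if_neg (h k hk)

/-- Let `n ≥ 3`, `1 ≤ m < n`, `r ≥ 1`, and let `S₁,…,Sₙ` be non-empty
subsets of `{1,…,r}` such that the `n + n(n-1)/2` subsets `S₁,…,Sₙ` and `S_k ∆ S_l`
(for `k ≠ l`, where `∆` is symmetric difference) are pairwise distinct.  Then in
`ℤ/2[X_S]` (variables indexed by subsets of `{1,…,r}`) the element
`(∏_{i=1}^m X_{S_i})·(∑_{j=1}^n ∏_{k≠j} X_{S_k ∆ S_j})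
  + ∑_{i=1}^m X_{S_i}·(∏_{k=1,k≠i}^m X_{S_k ∆ S_i})·(∏_{l≠i} X_{S_l} + ∑_{j≠i} X_{S_j}·∏_{l≠i,j} X_{S_l ∆ S_j})`
is nonzero. -/
theorem eta_milnor_pullback_ne_zero (m n r : ℕ) (hn : 3 ≤ n) (hm : 1 ≤ m) (hmn : m < n)
    (hr : 1 ≤ r) (S : Fin n → Finset (Fin r))
    (hSne : ∀ k, (S k).Nonempty)
    (hSinj : Function.Injective S)
    (hSd : ∀ k l a : Fin n, k ≠ l → S k ∆ S l ≠ S a)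
    (hDd : ∀ k l a b : Fin n, k ≠ l → a ≠ b → S k ∆ S l = S a ∆ S b →
      ({k, l} : Finset (Fin n)) = {a, b}) :
    ((∏ i : Fin m, (X (S (Fin.castLE hmn.le i)) :
          MvPolynomial (Finset (Fin r)) (ZMod 2))) *
        (∑ j : Fin n, ∏ k ∈ Finset.univ.erase j, X (S k ∆ S j)) +
      ∑ i : Fin m,
        X (S (Fin.castLE hmn.le i)) *
          (∏ k ∈ Finset.univ.erase i,
            X (S (Fin.castLE hmn.le k) ∆ S (Fin.castLE hmn.le i))) *
          ((∏ l ∈ Finset.univ.erase (Fin.castLE hmn.le i), X (S l)) +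
            ∑ j ∈ Finset.univ.erase (Fin.castLE hmn.le i),
              X (S j) *
                ∏ l ∈ (Finset.univ.erase (Fin.castLE hmn.le i)).erase j,
                  X (S l ∆ S j))) ≠ 0 := by
  have hX : ∀ a : Finset (Fin r), (X a : MvPolynomial (Finset (Fin r)) (ZMod 2))
      = monomial (Finsupp.single a 1) 1 := fun a => by
    rw [← pow_one (X a), X_pow_eq_monomial]
  have hj0 : n - 1 < n := by omega
  set j₀ : Fin n := ⟨n - 1, hj0⟩ with hj₀def
  -- castLE never hits j₀
  have hcast : ∀ i : Fin m, Fin.castLE hmn.le i ≠ j₀ := by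
    intro i hi
    have := congrArg Fin.val hi
    simp only [Fin.coe_castLE, hj₀def] at this
    omega
  -- derived pair facts
  have hpair : ∀ k l a b : Fin n, k ≠ l → a ≠ b → S k ∆ S l = S a ∆ S b →
      (k = a ∧ l = b) ∨ (k = b ∧ l = a) := by
    intro k l a b hkl hab h
    have hp := hDd k l a b hkl hab h
    have hk : k = a ∨ k = b := by
      have : k ∈ ({a, b} : Finset (Fin n)) := by
        rw [← hp]; simp
      simpa using this
    have hl : l = a ∨ l = b := by
      have : l ∈ ({a, b} : Finset (Fin n)) := by
        rw [← hp]; simp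
      simpa using this
    rcases hk with rfl | rfl
    · rcases hl with rfl | rfl
      · exact absurd rfl hkl
      · exact Or.inl ⟨rfl, rfl⟩
    · rcases hl with rfl | rfl
      · exact Or.inr ⟨rfl, rfl⟩
      · exact absurd rfl hkl
  set d : Finset (Fin r) →₀ ℕ :=
    (∑ i : Fin m, Finsupp.single (S (Fin.castLE hmn.le i)) 1) +
      ∑ k ∈ Finset.univ.erase j₀, Finsupp.single (S k ∆ S j₀) 1 with hd
  -- d evaluated at a witness of the form S a ∆ S b with b ∉ reach
  have hdP : ∀ a b : Fin n, a ≠ b →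
      (∑ i : Fin m, if S (Fin.castLE hmn.le i) = S a ∆ S b then 1 else 0) = 0 := by
    intro a b hab
    exact sum_ite_eq_zero' _ _ _ fun i _ => fun hE => hSd a b _ hab hE.symm
  intro h
  replace h := congrArg (coeff d) h
  rw [coeff_zero] at h
  simp only [prod_X_eq_monomial] at h
  simp only [hX, Finset.mul_sum, mul_add, monomial_mul, one_mul, mul_one,
    coeff_add, coeff_sum, coeff_monomial] at h
  rw [Finset.sum_eq_single j₀, if_pos rfl] at h
  · rw [Finset.sum_congr (g := fun _ => (0 : ZMod 2)) rfl fun i _ => ?_,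
      Finset.sum_const_zero, add_zero] at h
    · exact one_ne_zero h
    ·
      have hii := hcast i
      -- a common sub-fact: the middle product never produces the witness
      have hR : ∀ x' : Finset (Fin r), x' = S (Fin.castLE hmn.le i) ∆ S j₀ →
          (∑ k ∈ Finset.univ.erase i,
            if S (Fin.castLE hmn.le k) ∆ S (Fin.castLE hmn.le i) = x' then 1 else 0) = 0 := by
        rintro _ rfl
        refine sum_ite_eq_zero' _ _ _ fun k hk hE => ?_
        have hki : Fin.castLE hmn.le k ≠ Fin.castLE hmn.le i := by
          simp only [ne_eq, Fin.castLE_inj]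
          exact (Finset.mem_erase.mp hk).1
        rcases hpair _ _ _ _ hki hii hE with ⟨h1, h2⟩ | ⟨h1, h2⟩
        · exact hii h2
        · exact hcast k h1
      rw [if_neg ?hB0, Finset.sum_congr (g := fun _ => (0 : ZMod 2)) rfl fun j hj => ?_,
        Finset.sum_const_zero, add_zero]
      · rw [if_neg]
        intro hE
        have hx := DFunLike.congr_fun hE (S (Fin.castLE hmn.le i) ∆ S j₀)
        simp only [hd, Finsupp.add_apply, sum_single_apply, Finsupp.single_apply] at hx
        have hji : j ≠ Fin.castLE hmn.le i := (Finset.mem_erase.mp hj).1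
        rw [hR _ rfl, hdP _ _ hii] at hx
        rw [if_neg (fun hE' => hSd _ _ _ hii hE'.symm),
          if_neg (fun hE' => hSd _ _ _ hii hE'.symm)] at hx
        rw [sum_ite_eq_zero' _ _ _ ?hlast] at hx
        · have hge : 1 ≤ ∑ k ∈ Finset.univ.erase j₀,
              if S k ∆ S j₀ = S (Fin.castLE hmn.le i) ∆ S j₀ then 1 else 0 :=
            one_le_sum_ite _ _ _ (Fin.castLE hmn.le i)
              (Finset.mem_erase.mpr ⟨hii, Finset.mem_univ _⟩) rfl
          omega
        case hlast =>
          intro l hl hE'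
          have hlj : l ≠ j := (Finset.mem_erase.mp hl).1
          have hli : l ≠ Fin.castLE hmn.le i := (Finset.mem_erase.mp (Finset.mem_erase.mp hl).2).1
          rcases hpair _ _ _ _ hlj hii hE' with ⟨h1, h2⟩ | ⟨h1, h2⟩
          · exact hli h1
          · exact hji h2
      case hB0 =>
        intro hE
        have hx := DFunLike.congr_fun hE (S (Fin.castLE hmn.le i) ∆ S j₀)
        simp only [hd, Finsupp.add_apply, sum_single_apply, Finsupp.single_apply] at hx
        rw [hR _ rfl, hdP _ _ hii, if_neg (fun hE' => hSd _ _ _ hii hE'.symm),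
          sum_ite_eq_zero' _ _ _ (fun l _ hE' => hSd _ _ _ hii hE'.symm)] at hx
        have hge : 1 ≤ ∑ k ∈ Finset.univ.erase j₀,
            if S k ∆ S j₀ = S (Fin.castLE hmn.le i) ∆ S j₀ then 1 else 0 :=
          one_le_sum_ite _ _ _ (Fin.castLE hmn.le i)
            (Finset.mem_erase.mpr ⟨hii, Finset.mem_univ _⟩) rfl
        omega
  -- the other `A` terms contribute 0
  · intro j _ hj
    rw [if_neg]
    intro hE
    -- pick a ∉ {j, j₀}
    obtain ⟨a, haj, haj₀⟩ : ∃ a : Fin n, a ≠ j ∧ a ≠ j₀ := by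
      have hne : (({j, j₀} : Finset (Fin n))ᶜ).Nonempty := by
        rw [← Finset.card_pos, Finset.card_compl]
        have h1 : ({j, j₀} : Finset (Fin n)).card ≤ 2 :=
          (Finset.card_insert_le _ _).trans (by simp)
        have h2 : Fintype.card (Fin n) = n := Fintype.card_fin n
        omega
      obtain ⟨a, ha⟩ := hne
      simp only [Finset.mem_compl, Finset.mem_insert, Finset.mem_singleton, not_or] at ha
      exact ⟨a, ha.1, ha.2⟩
    have hx := DFunLike.congr_fun hE (S a ∆ S j)
    simp only [hd, Finsupp.add_apply, sum_single_apply] at hx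
    have hge : 1 ≤ ∑ k ∈ Finset.univ.erase j, if S k ∆ S j = S a ∆ S j then 1 else 0 :=
      one_le_sum_ite _ _ _ a (Finset.mem_erase.mpr ⟨haj, Finset.mem_univ _⟩) rfl
    rw [sum_ite_eq_zero' (f := fun k => S k ∆ S j₀) _ _ ?hz] at hx
    · omega
    case hz =>
      intro k hk hE'
      have hkj₀ : k ≠ j₀ := (Finset.mem_erase.mp hk).1
      rcases hpair _ _ _ _ hkj₀ haj hE' with ⟨h1, h2⟩ | ⟨h1, h2⟩
      · exact hj h2.symm
      · exact haj₀ h2.symm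
  · intro hno
    exact absurd (Finset.mem_univ j₀) hno
end

section
/- Let K be a field of characteristic 2, let n ≥ 1, and let y₁, …, yₙ ∈ K be pairwise distinct and all nonzero. Then (y₁ ⋯ yₙ)⁻¹ + ∑_{i=1}^{n} ( y_i · ∏_{j≠i} (y_i + y_j) )⁻¹ = 0. -/
/-!
Evaluate the partial fraction decomposition `1 / ∏ᵢ (x - yᵢ) = ∑ᵢ wᵢ / (x - yᵢ)`, with Lagrange
weights `wᵢ = ∏_{j ≠ i} (yᵢ - yⱼ)⁻¹`, at the non-node `x = 0`. In characteristic `2` all signs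
disappear and it says that the sum in the theorem equals `(∏ yᵢ)⁻¹`; adding `(∏ yᵢ)⁻¹` gives `0`.
-/

open Finset Polynomial Lagrange

theorem Lagrange.sum_nodalWeight_mul_inv_sub_eq_inv_eval_nodal {F ι : Type*} [Field F]
    [DecidableEq ι] {s : Finset ι} {v : ι → F} {x : F} (hvs : Set.InjOn v s) (hs : s.Nonempty)
    (hx : ∀ i ∈ s, x ≠ v i) :
    ∑ i ∈ s, nodalWeight s v i * (x - v i)⁻¹ = (eval x (nodal s v))⁻¹ := by
  refine eq_inv_of_mul_eq_one_right ?_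
  simpa only [Pi.one_apply, mul_one, interpolate_one hvs hs, eval_one] using
    (eval_interpolate_not_at_node 1 hx).symm

/-- Lemma 4.1(ii). Let `K` be a field of characteristic `2`, `n ≥ 1`,
and `y₁, …, yₙ ∈ K` pairwise distinct and all nonzero.  Then
`(y₁ ⋯ yₙ)⁻¹ + ∑_{i=1}^n (y_i · ∏_{j≠i} (y_i + y_j))⁻¹ = 0`. -/
theorem inv_prod_add_sum_eq_zero (K : Type*) [Field K] [CharP K 2] (n : ℕ) (hn : 1 ≤ n)
    (y : Fin n → K) (hy : Function.Injective y) (hy0 : ∀ i, y i ≠ 0) :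
    (∏ i : Fin n, y i)⁻¹ +
      ∑ i : Fin n, (y i * ∏ j ∈ Finset.univ.erase i, (y i + y j))⁻¹ = 0 := by
  have partial_fractions := sum_nodalWeight_mul_inv_sub_eq_inv_eval_nodal (x := 0)
    hy.injOn (univ_nonempty_iff.mpr ⟨⟨0, hn⟩⟩) fun i _ ↦ (hy0 i).symm
  simp only [eval_nodal, nodalWeight, CharTwo.sub_eq_add, zero_add,
    prod_inv_distrib, mul_inv, mul_comm] at partial_fractions ⊢
  rw [partial_fractions, CharTwo.add_self_eq_zero]
end

section
/- Let K be a field of characteristic 2, let n ≥ 1, and let y₀, y₁, …, yₙ ∈ K be pairwise distinct. For a tuple (z₁,…,z_t) of pairwise distinct elements set p(z₁,…,z_t) := ∑_{i=1}^{t} ( ∏_{j≠i} (z_j + z_i) )⁻¹. Then (y₀ + yₙ) · p(y₀, y₁, …, yₙ) = p(y₀, y₁, …, y_{n−1}) + p(y₁, …, yₙ). -/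
open scoped BigOperators

/-- For a tuple `(z₁, …, z_t)` of (pairwise distinct) elements of `K`,
`pSum z = ∑_{i=1}^{t} (∏_{j≠i} (z_j + z_i))⁻¹`. -/
noncomputable def pSum {K : Type*} [Field K] {t : ℕ} (z : Fin t → K) : K :=
  ∑ i : Fin t, (∏ j ∈ Finset.univ.erase i, (z j + z i))⁻¹

/-- recursion for Lemma 4.1(i). Let `K` be a field of characteristic
`2`, `n ≥ 1`, -/
lemma pSum_eq_zero {K : Type*} [Field K] [CharP K 2] {t : ℕ} (ht : 2 ≤ t)
    (z : Fin t → K) (hz : Function.Injective z) : pSum z = 0 := by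
  haveI : Nonempty (Fin t) := ⟨⟨0, by omega⟩⟩
  have hvs : Set.InjOn z (Finset.univ : Finset (Fin t)) := hz.injOn
  have hbasis : ∀ i : Fin t, (Lagrange.basis Finset.univ z i).coeff (t - 1)
      = (∏ j ∈ Finset.univ.erase i, (z j + z i))⁻¹ := by
    intro i
    have hd : (Lagrange.basis Finset.univ z i).natDegree = t - 1 := by
      rw [Lagrange.natDegree_basis hvs (Finset.mem_univ i), Finset.card_univ,
        Fintype.card_fin]
    rw [← hd, Polynomial.coeff_natDegree, Lagrange.basis, Polynomial.leadingCoeff_prod,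
      ← Finset.prod_inv_distrib]
    refine Finset.prod_congr rfl fun j hj => ?_
    have hij : z i ≠ z j := fun h => (Finset.mem_erase.mp hj).1 (hz h.symm)
    rw [Lagrange.basisDivisor, Polynomial.leadingCoeff_mul, Polynomial.leadingCoeff_C,
      Polynomial.leadingCoeff_X_sub_C, mul_one]
    congr 1
    rw [sub_eq_add_neg, CharTwo.neg_eq, add_comm]
  have hsum := Lagrange.sum_basis hvs Finset.univ_nonempty
  have hc := congrArg (fun p => Polynomial.coeff p (t - 1)) hsum
  simp only [Polynomial.finset_sum_coeff] at hc
  have h1 : (1 : Polynomial K).coeff (t - 1) = 0 := by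
    rw [Polynomial.coeff_one]
    simp only [if_neg (by omega : ¬ (t - 1 = 0))]
  rw [pSum, ← Finset.sum_congr rfl fun i _ => hbasis i, hc, h1]

/-- pSum of a single element is 1. -/
lemma pSum_one {K : Type*} [Field K] (z : Fin 1 → K) : pSum z = 1 := by
  simp [pSum]

/-- recursion for Lemma 4.1(i). Let `K` be a field of characteristic
`2`, `n ≥ 1`, and `y₀, y₁, …, yₙ ∈ K` pairwise distinct.  Then
`(y₀ + yₙ) · p(y₀, …, yₙ) = p(y₀, …, y_{n-1}) + p(y₁, …, yₙ)`. -/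
theorem pSum_recursion (K : Type*) [Field K] [CharP K 2] (n : ℕ) (hn : 1 ≤ n)
    (y : Fin (n + 1) → K) (hy : Function.Injective y) :
    (y 0 + y (Fin.last n)) * pSum y =
      pSum (y ∘ Fin.castSucc) + pSum (y ∘ Fin.succ) := by
  have h1 : pSum y = 0 := pSum_eq_zero (by omega) y hy
  rw [h1, mul_zero]
  rcases eq_or_lt_of_le hn with h | h
  · subst h
    rw [pSum_one, pSum_one, CharTwo.add_self_eq_zero]
  · have h2 : pSum (y ∘ Fin.castSucc) = 0 :=
      pSum_eq_zero (by omega) _ (hy.comp (Fin.castSucc_injective n))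
    have h3 : pSum (y ∘ Fin.succ) = 0 :=
      pSum_eq_zero (by omega) _ (hy.comp (Fin.succ_injective n))
    rw [h2, h3, add_zero]
end

section
/- Let K be a field of characteristic 2, let n ≥ 1, let k be a natural number, and let y₀, y₁, …, yₙ ∈ K be pairwise distinct. For a tuple (z₁,…,z_t) of pairwise distinct elements set q_k(z₁,…,z_t) := ∑_{i=1}^{t} z_i^{k} · ( ∏_{j≠i} (z_j + z_i) )⁻¹. Then (y₀ + yₙ) · q_k(y₀, y₁, …, yₙ) = q_k(y₀, y₁, …, y_{n−1}) + q_k(y₁, …, yₙ). -/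
open scoped BigOperators

/-- For a tuple `(z₁, …, z_t)` of (pairwise distinct) elements of `K`,
`qSum k z = ∑_{i=1}^{t} z_i^k · (∏_{j≠i} (z_j + z_i))⁻¹`. -/
noncomputable def qSum {K : Type*} [Field K] (k : ℕ) {t : ℕ} (z : Fin t → K) : K :=
  ∑ i : Fin t, z i ^ k * (∏ j ∈ Finset.univ.erase i, (z j + z i))⁻¹

/-- recursion for Lemma 4.1(iii). Let `K` be a field of characteristic
`2`, `n ≥ 1`, `k ∈ ℕ`, and `y₀, y₁, …, yₙ ∈ K` pairwise distinct.  Then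
`(y₀ + yₙ) · q_k(y₀, …, yₙ) = q_k(y₀, …, y_{n-1}) + q_k(y₁, …, yₙ)`. -/
theorem qSum_recursion (K : Type*) [Field K] [CharP K 2] (n : ℕ) (hn : 1 ≤ n) (k : ℕ)
    (y : Fin (n + 1) → K) (hy : Function.Injective y) :
    (y 0 + y (Fin.last n)) * qSum k y =
      qSum k (y ∘ Fin.castSucc) + qSum k (y ∘ Fin.succ) := by
  classical
  set L : Fin (n + 1) := Fin.last n with hL
  have hne : ∀ i j : Fin (n + 1), j ≠ i → y j + y i ≠ 0 := by
    intro i j hji h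
    apply hji; apply hy
    have h1 : y j = -y i := eq_neg_of_add_eq_zero_left h
    rwa [CharTwo.neg_eq] at h1
  set P : Fin (n + 1) → K := fun i => ∏ j ∈ Finset.univ.erase i, (y j + y i) with hPdef
  set Q : Fin (n + 1) → K := fun i => ∏ j ∈ (Finset.univ.erase i).erase L, (y j + y i)
    with hQdef
  set R : Fin (n + 1) → K := fun i => ∏ j ∈ (Finset.univ.erase i).erase 0, (y j + y i)
    with hRdef
  have hPne : ∀ i, P i ≠ 0 := by
    intro i
    rw [hPdef]
    exact Finset.prod_ne_zero_iff.mpr fun j hj => hne i j (Finset.ne_of_mem_erase hj)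
  have hPQ : ∀ i, i ≠ L → P i = (y L + y i) * Q i := by
    intro i hi
    rw [hPdef, hQdef]
    exact (Finset.mul_prod_erase _ _
      (Finset.mem_erase.mpr ⟨Ne.symm hi, Finset.mem_univ _⟩)).symm
  have hPR : ∀ i, i ≠ 0 → P i = (y 0 + y i) * R i := by
    intro i hi
    rw [hPdef, hRdef]
    exact (Finset.mul_prod_erase _ _
      (Finset.mem_erase.mpr ⟨Ne.symm hi, Finset.mem_univ _⟩)).symm
  have h0L : (0 : Fin (n + 1)) ≠ L := by
    rw [hL]
    intro h
    have := congrArg Fin.val h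
    simp [Fin.last] at this
    omega
  -- Step A : rewrite the castSucc sum
  have hA : qSum k (y ∘ Fin.castSucc) =
      ∑ i : Fin (n + 1), if i = L then 0 else y i ^ k * (Q i)⁻¹ := by
    rw [Fin.sum_univ_castSucc]
    rw [if_pos rfl, add_zero]
    simp only [qSum, Function.comp]
    refine Finset.sum_congr rfl fun i _ => ?_
    rw [if_neg (by exact (Fin.castSucc_lt_last i).ne)]
    congr 1
    congr 1
    have himg : (Finset.univ.erase i).image Fin.castSucc
        = (Finset.univ.erase (Fin.castSucc i)).erase L := by
      ext a
      simp only [Finset.mem_image, Finset.mem_erase, Finset.mem_univ, and_true, true_and]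
      constructor
      · rintro ⟨j, hj, rfl⟩
        exact ⟨(Fin.castSucc_lt_last j).ne, fun h => hj (Fin.castSucc_injective n h)⟩
      · rintro ⟨haL, hai⟩
        refine ⟨a.castPred haL, fun h => hai ?_, Fin.castSucc_castPred a haL⟩
        rw [← Fin.castSucc_castPred a haL, h]
    show _ = ∏ j ∈ (Finset.univ.erase i.castSucc).erase L, (y j + y i.castSucc)
    rw [← himg, Finset.prod_image (fun a _ b _ h => Fin.castSucc_injective n h)]
  -- Step B : rewrite the succ sum
  have hB : qSum k (y ∘ Fin.succ) =
      ∑ i : Fin (n + 1), if i = 0 then 0 else y i ^ k * (R i)⁻¹ := by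
    rw [Fin.sum_univ_succ]
    rw [if_pos rfl, zero_add]
    simp only [qSum, Function.comp]
    refine Finset.sum_congr rfl fun i _ => ?_
    rw [if_neg (Fin.succ_ne_zero i)]
    congr 1
    congr 1
    have himg : (Finset.univ.erase i).image Fin.succ
        = (Finset.univ.erase (Fin.succ i)).erase 0 := by
      ext a
      simp only [Finset.mem_image, Finset.mem_erase, Finset.mem_univ, and_true, true_and]
      constructor
      · rintro ⟨j, hj, rfl⟩
        exact ⟨Fin.succ_ne_zero j, fun h => hj (Fin.succ_injective n h)⟩
      · rintro ⟨ha0, hai⟩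
        refine ⟨a.pred ha0, fun h => hai ?_, Fin.succ_pred a ha0⟩
        rw [← Fin.succ_pred a ha0, h]
    show _ = ∏ j ∈ (Finset.univ.erase i.succ).erase 0, (y j + y i.succ)
    rw [← himg, Finset.prod_image (fun a _ b _ h => Fin.succ_injective n h)]
  rw [hA, hB, ← Finset.sum_add_distrib]
  simp only [qSum]
  rw [Finset.mul_sum]
  refine Finset.sum_congr rfl fun i _ => ?_
  have hPi : (∏ j ∈ Finset.univ.erase i, (y j + y i)) = P i := rfl
  rw [hPi]
  by_cases hiL : i = L
  · subst hiL
    rw [if_pos rfl, if_neg (Ne.symm h0L), zero_add]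
    have hfac := hPR L (Ne.symm h0L)
    have hRne : R L ≠ 0 := fun h => hPne L (by rw [hfac, h, mul_zero])
    have h1 : y 0 + y L ≠ 0 := hne L 0 h0L
    rw [hfac]
    field_simp
  · rw [if_neg hiL]
    by_cases hi0 : i = 0
    · subst hi0
      rw [if_pos rfl, add_zero]
      have hfac := hPQ 0 hiL
      have hQne : Q 0 ≠ 0 := fun h => hPne 0 (by rw [hfac, h, mul_zero])
      have h1 : y L + y 0 ≠ 0 := hne 0 L (Ne.symm h0L)
      rw [hfac]
      field_simp
      ring
    · rw [if_neg hi0]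
      have hq := hPQ i hiL
      have hr := hPR i hi0
      have hQne : Q i ≠ 0 := fun h => hPne i (by rw [hq, h, mul_zero])
      have hRne : R i ≠ 0 := fun h => hPne i (by rw [hr, h, mul_zero])
      have h1 : y L + y i ≠ 0 := hne i L fun h => hiL h.symm
      have h2 : y 0 + y i ≠ 0 := hne i 0 fun h => hi0 h.symm
      have hQinv : (Q i)⁻¹ = (y L + y i) * (P i)⁻¹ := by
        rw [hq, mul_inv, ← mul_assoc, mul_inv_cancel₀ h1, one_mul]
      have hRinv : (R i)⁻¹ = (y 0 + y i) * (P i)⁻¹ := by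
        rw [hr, mul_inv, ← mul_assoc, mul_inv_cancel₀ h2, one_mul]
      rw [hQinv, hRinv]
      have hself : y i + y i = 0 := CharTwo.add_self_eq_zero _
      linear_combination (-(y i ^ k * (P i)⁻¹)) * hself
end

section
/- Let K be a field of characteristic 2, let n ≥ 2, let y₁, …, yₙ ∈ K be pairwise distinct, and let m be any natural number. Then ∑_{j=1}^{n} ( ∑_{k≠j} (y_k^{m} + y_j^{m}) ) · ( ∏_{k≠j} (y_k + y_j) )⁻¹ equals 0 if n is even, and equals ∑_{j=1}^{n} y_j^{m} · ( ∏_{k≠j} (y_k + y_j) )⁻¹ if n is odd. -/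
open scoped BigOperators

lemma key_lagrange (K : Type*) [Field K] (n : ℕ) (hn : 2 ≤ n) (y : Fin n → K)
    (hy : Function.Injective y) :
    ∑ j : Fin n, (∏ k ∈ Finset.univ.erase j, (y j - y k))⁻¹ = 0 := by
  have hinj : Set.InjOn y (Finset.univ : Finset (Fin n)) := fun a _ b _ h => hy h
  have hs : (Finset.univ : Finset (Fin n)).Nonempty := ⟨⟨0, by omega⟩, Finset.mem_univ _⟩
  have h1 := Lagrange.sum_basis hinj hs
  have h2 := congrArg (fun p => Polynomial.coeff p (n - 1)) h1
  simp only [Polynomial.finset_sum_coeff] at h2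
  have hcoeff : ∀ j : Fin n,
      (Lagrange.basis Finset.univ y j).coeff (n - 1) =
        ∏ k ∈ Finset.univ.erase j, (y j - y k)⁻¹ := by
    intro j
    have hd : (Lagrange.basis Finset.univ y j).natDegree = n - 1 := by
      rw [Lagrange.natDegree_basis hinj (Finset.mem_univ j), Finset.card_univ, Fintype.card_fin]
    rw [← hd, ← Polynomial.leadingCoeff, Lagrange.basis, Polynomial.leadingCoeff_prod]
    refine Finset.prod_congr rfl fun k hk => ?_
    have hne : y j ≠ y k := fun h => (Finset.mem_erase.mp hk).1 (hy h).symm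
    rw [Lagrange.basisDivisor, Polynomial.leadingCoeff_mul, Polynomial.leadingCoeff_C,
      Polynomial.leadingCoeff_X_sub_C, mul_one]
  simp only [hcoeff] at h2
  rw [Polynomial.coeff_one, if_neg (by omega)] at h2
  rw [← h2]
  exact Finset.sum_congr rfl fun j _ => by rw [Finset.prod_inv_distrib]

/-- Let `K` be a field of characteristic `2`, `n ≥ 2`,
`y₁, …, yₙ ∈ K` pairwise distinct and `m ∈ ℕ`.  Then
`∑_{j=1}^n (∑_{k≠j} (y_k^m + y_j^m)) · (∏_{k≠j} (y_k + y_j))⁻¹` equals `0` if `n` is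
even, and equals `∑_{j=1}^n y_j^m · (∏_{k≠j} (y_k + y_j))⁻¹` if `n` is odd. -/
theorem coeff_bm_delta_one (K : Type*) [Field K] [CharP K 2] (n : ℕ) (hn : 2 ≤ n)
    (y : Fin n → K) (hy : Function.Injective y) (m : ℕ) :
    (Even n →
      ∑ j : Fin n, (∑ k ∈ Finset.univ.erase j, (y k ^ m + y j ^ m)) *
        (∏ k ∈ Finset.univ.erase j, (y k + y j))⁻¹ = 0) ∧
    (Odd n →
      ∑ j : Fin n, (∑ k ∈ Finset.univ.erase j, (y k ^ m + y j ^ m)) *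
          (∏ k ∈ Finset.univ.erase j, (y k + y j))⁻¹ =
        ∑ j : Fin n, y j ^ m * (∏ k ∈ Finset.univ.erase j, (y k + y j))⁻¹) := by
  have h2z : (2 : K) = 0 := CharTwo.two_eq_zero
  have hP : ∀ j : Fin n, ∏ k ∈ Finset.univ.erase j, (y k + y j) =
      ∏ k ∈ Finset.univ.erase j, (y j - y k) :=
    fun j => Finset.prod_congr rfl fun k _ => by rw [CharTwo.sub_eq_add, add_comm]
  have hkey : ∑ j : Fin n, (∏ k ∈ Finset.univ.erase j, (y k + y j))⁻¹ = 0 := by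
    simp only [hP]; exact key_lagrange K n hn y hy
  set S := ∑ k : Fin n, y k ^ m with hS
  have hsum : ∀ j : Fin n, ∑ k ∈ Finset.univ.erase j, (y k ^ m + y j ^ m) =
      S + (n : K) * y j ^ m := by
    intro j
    rw [Finset.sum_add_distrib, Finset.sum_const, Finset.card_erase_of_mem (Finset.mem_univ j),
      Finset.card_univ, Fintype.card_fin, Finset.sum_erase_eq_sub (Finset.mem_univ j),
      nsmul_eq_mul, Nat.cast_sub (by omega : 1 ≤ n), Nat.cast_one]
    linear_combination -(y j ^ m) * h2z
  constructor
  · intro he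
    have hn0 : (n : K) = 0 := (CharP.cast_eq_zero_iff K 2 n).mpr he.two_dvd
    simp only [hsum, hn0, zero_mul, add_zero]
    rw [← Finset.mul_sum, hkey, mul_zero]
  · intro ho
    have hn1 : (n : K) = 1 := by
      obtain ⟨q, hq⟩ := ho
      subst hq; push_cast; rw [h2z]; ring
    simp only [hsum, hn1, one_mul, add_mul]
    rw [Finset.sum_add_distrib, ← Finset.mul_sum, hkey, mul_zero, zero_add]
end
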